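/- In any Nash equilibrium (F_1, F_2) of the single-item all-pay auction with parameters (B_1, B_2, v_1, v_2), the suprema of the supports of the two players' strategies coincide and equal L: sup Supp(F_1) = sup Supp(F_2) = min{B_1, B_2, v_1, v_2}. -/

import Mathlib

open MeasureTheory Set

noncomputable section

/-- `L = min {B₁, B₂, v₁, v₂}` for the single-item auction. -/
def Lval (B v : Fin 2 → ℝ) : ℝ := min (min (B 0) (B 1)) (min (v 0) (v 1))

/-- Probability that player `i` wins the single item when bidding `xi` while the
opponent bids `xo`: the strictly higher bid wins; on a tie at
`min {B₁, B₂, v₁, v₂}` the player with the strictly larger `min {Bᵢ, vᵢ}` wins,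
and all other ties are resolved by a fair coin. -/
def winProb (B v : Fin 2 → ℝ) (i : Fin 2) (xi xo : ℝ) : ℝ :=
  if xo < xi then 1
  else if xi < xo then 0
  else if xi = Lval B v ∧ min (B (1 - i)) (v (1 - i)) < min (B i) (v i) then 1
  else if xi = Lval B v ∧ min (B i) (v i) < min (B (1 - i)) (v (1 - i)) then 0
  else 1 / 2

/-- Expected utility of player `i` from the pure bids `xi` (own) and `xo` (opponent):
he pays his bid in any case and receives `v i` with his winning probability. -/
def payoff (B v : Fin 2 → ℝ) (i : Fin 2) (xi xo : ℝ) : ℝ :=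
  winProb B v i xi xo * v i - xi

/-- A mixed strategy of a player with budget `Bi`: a probability measure on `[0, Bi]`. -/
def IsStrategy (Bi : ℝ) (μ : Measure ℝ) : Prop :=
  IsProbabilityMeasure μ ∧ μ (Icc 0 Bi) = 1

/-- Expected utility of player `i` when he plays `μ` and the opponent plays `ν`. -/
def expUtil (B v : Fin 2 → ℝ) (i : Fin 2) (μ ν : Measure ℝ) : ℝ :=
  ∫ xi, (∫ xo, payoff B v i xi xo ∂ν) ∂μ

/-- `(F 0, F 1)` is a (mixed) Nash equilibrium of the single-item all-pay auction. -/
def IsNash (B v : Fin 2 → ℝ) (F : Fin 2 → Measure ℝ) : Prop :=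
  (∀ i, IsStrategy (B i) (F i)) ∧
  ∀ i, ∀ μ, IsStrategy (B i) μ →
    expUtil B v i μ (F (1 - i)) ≤ expUtil B v i (F i) (F (1 - i))

/-- The (topological) support of a mixed strategy. -/
def supp (μ : Measure ℝ) : Set ℝ := {x | ∀ U ∈ nhds x, μ U ≠ 0}

/-!
Almost every equilibrium bid is a best response to the opponent's mixed strategy. A bid above
the opponent's top bid wins surely, so nobody bids above the opponent's top, nor above his own
value: the two tops coincide and are at most `L`. If the common top were below `L`, a bid just
under `L` would earn a positive sure profit, so the opponent must carry mass bounded away from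
zero below every equilibrium bid. At the bottoms of the supports this forces both players to
have an atom at a common point below `L`, where ties are split evenly, and overbidding that
atom slightly is then a profitable deviation.
-/

open Filter ProbabilityTheory

lemma supp_eq_support (μ : Measure ℝ) : supp μ = μ.support := by
  ext x
  simp [supp, Measure.mem_support_iff_forall, pos_iff_ne_zero]

lemma StieltjesFunction.upperSemicontinuous (f : StieltjesFunction ℝ) :
    UpperSemicontinuous f := by
  intro x y hxy
  rw [← nhdsLE_sup_nhdsGE, eventually_sup]
  exact ⟨eventually_nhdsWithin_of_forall fun z hz => (f.mono hz).trans_lt hxy,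
    f.right_continuous x (Iio_mem_nhds hxy)⟩

lemma le_measureReal_Iic_of_mem_support {μ ν : Measure ℝ} [IsProbabilityMeasure ν] {c x : ℝ}
    (h : ∀ᵐ y ∂μ, c ≤ ν.real (Iic y)) (hx : x ∈ μ.support) : c ≤ ν.real (Iic x) := by
  simp_rw [← cdf_eq_real] at h ⊢
  exact Measure.support_subset_of_isClosed
    ((cdf ν).upperSemicontinuous.isClosed_preimage c) h hx

lemma sInf_support_le_of_measure_Iic_ne_zero {μ : Measure ℝ} (hμ : BddBelow μ.support) {x : ℝ}
    (h : μ (Iic x) ≠ 0) : sInf μ.support ≤ x := by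
  obtain ⟨y, hyx, hy⟩ := Measure.nonempty_inter_support_of_pos (pos_iff_ne_zero.2 h)
  exact (csInf_le hμ hy).trans hyx

lemma measure_Iio_sInf_support {μ : Measure ℝ} (hμ : BddBelow μ.support) :
    μ (Iio (sInf μ.support)) = 0 :=
  measure_mono_null (fun _ hx hmem => (csInf_le hμ hmem).not_gt hx) Measure.measure_compl_support

lemma measure_Iic_sInf_support {μ : Measure ℝ} (hμ : BddBelow μ.support) :
    μ (Iic (sInf μ.support)) = μ {sInf μ.support} := by
  rw [← Iio_union_right, measure_union (by simp) (measurableSet_singleton _),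
    measure_Iio_sInf_support hμ, zero_add]

namespace IsStrategy

variable {b : ℝ} {μ : Measure ℝ}

lemma ae_mem_Icc (h : IsStrategy b μ) : ∀ᵐ x ∂μ, x ∈ Icc 0 b :=
  haveI := h.1
  (prob_compl_eq_zero_iff measurableSet_Icc).2 h.2

lemma support_subset_Icc (h : IsStrategy b μ) : μ.support ⊆ Icc 0 b :=
  Measure.support_subset_of_isClosed isClosed_Icc h.ae_mem_Icc

lemma support_nonempty (h : IsStrategy b μ) : μ.support.Nonempty :=
  haveI := h.1
  Measure.nonempty_support (IsProbabilityMeasure.ne_zero μ)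

lemma sSup_support_le_of_ae_le (h : IsStrategy b μ) {c : ℝ} (hc : ∀ᵐ x ∂μ, x ≤ c) :
    sSup μ.support ≤ c :=
  csSup_le h.support_nonempty fun _ hx => Measure.support_subset_of_isClosed isClosed_Iic hc hx

lemma bddAbove_support (h : IsStrategy b μ) : BddAbove μ.support :=
  bddAbove_Icc.mono h.support_subset_Icc

lemma bddBelow_support (h : IsStrategy b μ) : BddBelow μ.support :=
  bddBelow_Icc.mono h.support_subset_Icc

lemma sSup_support_mem_Icc (h : IsStrategy b μ) : sSup μ.support ∈ Icc 0 b :=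
  h.support_subset_Icc <|
    Measure.isClosed_support.csSup_mem h.support_nonempty h.bddAbove_support

lemma sInf_support_mem (h : IsStrategy b μ) : sInf μ.support ∈ μ.support :=
  Measure.isClosed_support.csInf_mem h.support_nonempty h.bddBelow_support

lemma measure_Iio_eq_one (h : IsStrategy b μ) {c : ℝ} (hc : sSup μ.support < c) :
    μ (Iio c) = 1 := by
  have := h.1
  refine (prob_compl_eq_zero_iff measurableSet_Iio).1
    (measure_mono_null (fun x hx hmem => ?_ : (Iio c)ᶜ ⊆ μ.supportᶜ) Measure.measure_compl_support)
  exact hx ((le_csSup h.bddAbove_support hmem).trans_lt hc)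

lemma restrict_compl_add_dirac (h : IsStrategy b μ) {S : Set ℝ} (hS : MeasurableSet S) {a : ℝ}
    (ha : a ∈ Icc 0 b) : IsStrategy b (μ.restrict Sᶜ + μ S • Measure.dirac a) := by
  have := h.1
  have hsum : μ Sᶜ + μ S = 1 := by
    rw [← measure_union disjoint_compl_left hS, compl_union_self, measure_univ]
  refine ⟨⟨?_⟩, ?_⟩
  · simpa using hsum
  · rw [Measure.add_apply, Measure.restrict_apply measurableSet_Icc, inter_comm,
      measure_inter_conull ((prob_compl_eq_zero_iff measurableSet_Icc).2 h.2)]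
    simpa [ha] using hsum

end IsStrategy

lemma Lval_le_B (B v : Fin 2 → ℝ) (i : Fin 2) : Lval B v ≤ B i := by
  fin_cases i <;> simp [Lval]

lemma Lval_le_v (B v : Fin 2 → ℝ) (i : Fin 2) : Lval B v ≤ v i := by
  fin_cases i <;> simp [Lval]

section PurePayoff

variable (B v : Fin 2 → ℝ) (i : Fin 2)

def tieWinProb (x : ℝ) : ℝ :=
  if x = Lval B v ∧ min (B (1 - i)) (v (1 - i)) < min (B i) (v i) then 1
  else if x = Lval B v ∧ min (B i) (v i) < min (B (1 - i)) (v (1 - i)) then 0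
  else 1 / 2

def winProbAgainst (ν : Measure ℝ) (x : ℝ) : ℝ :=
  ν.real (Iio x) + tieWinProb B v i x * ν.real {x}

def bidPayoff (ν : Measure ℝ) (x : ℝ) : ℝ :=
  v i * winProbAgainst B v i ν x - x

lemma tieWinProb_mem_Icc (x : ℝ) : tieWinProb B v i x ∈ Icc 0 1 := by
  unfold tieWinProb; split_ifs <;> norm_num

lemma tieWinProb_of_ne {x : ℝ} (hx : x ≠ Lval B v) : tieWinProb B v i x = 1 / 2 := by
  simp [tieWinProb, hx]

lemma measurable_tieWinProb : Measurable (tieWinProb B v i) := by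
  unfold tieWinProb
  refine Measurable.ite ?_ measurable_const (Measurable.ite ?_ measurable_const measurable_const)
    <;> exact (measurableSet_singleton _).inter (MeasurableSet.const _)

lemma winProb_eq_indicator (x y : ℝ) :
    winProb B v i x y =
      (Iio x).indicator 1 y + tieWinProb B v i x * ({x} : Set ℝ).indicator 1 y := by
  rcases lt_trichotomy y x with h | rfl | h
  · simp [winProb, h, h.ne]
  · simp [winProb, tieWinProb]
  · simp [winProb, h, h.not_gt, h.ne']

variable {B v i}

lemma integral_winProb (ν : Measure ℝ) [IsFiniteMeasure ν] (x : ℝ) :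
    ∫ y, winProb B v i x y ∂ν = winProbAgainst B v i ν x := by
  simp_rw [winProb_eq_indicator]
  rw [integral_add ((integrable_const 1).indicator measurableSet_Iio)
      (((integrable_const 1).indicator (measurableSet_singleton x)).const_mul _),
    integral_const_mul, integral_indicator_one measurableSet_Iio,
    integral_indicator_one (measurableSet_singleton x), winProbAgainst]

lemma integral_payoff (ν : Measure ℝ) [IsProbabilityMeasure ν] (x : ℝ) :
    ∫ y, payoff B v i x y ∂ν = bidPayoff B v i ν x := by
  have hint : Integrable (fun y => winProb B v i x y) ν := by
    simp_rw [winProb_eq_indicator]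
    exact ((integrable_const 1).indicator measurableSet_Iio).add
      (((integrable_const 1).indicator (measurableSet_singleton x)).const_mul _)
  simp only [payoff]
  rw [integral_sub (hint.mul_const _) (integrable_const _), integral_mul_const, integral_winProb,
    integral_const, probReal_univ, one_smul, bidPayoff, mul_comm]

lemma expUtil_eq_integral_bidPayoff (μ ν : Measure ℝ) [IsProbabilityMeasure ν] :
    expUtil B v i μ ν = ∫ x, bidPayoff B v i ν x ∂μ := by
  simp only [expUtil, integral_payoff]

lemma winProbAgainst_nonneg (ν : Measure ℝ) (x : ℝ) : 0 ≤ winProbAgainst B v i ν x :=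
  add_nonneg measureReal_nonneg (mul_nonneg (tieWinProb_mem_Icc B v i x).1 measureReal_nonneg)

variable (ν : Measure ℝ) [IsFiniteMeasure ν]

lemma measureReal_Iic_eq_add (x : ℝ) : ν.real (Iic x) = ν.real (Iio x) + ν.real {x} := by
  rw [← Iio_union_right, measureReal_union (by simp) (measurableSet_singleton x)]

lemma winProbAgainst_le (x : ℝ) : winProbAgainst B v i ν x ≤ ν.real (Iic x) := by
  rw [measureReal_Iic_eq_add, winProbAgainst]
  have := (tieWinProb_mem_Icc B v i x).2
  nlinarith [measureReal_nonneg (μ := ν) (s := {x})]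

lemma measurable_bidPayoff : Measurable (bidPayoff B v i ν) := by
  have hIio : Measurable fun x => ν.real (Iio x) :=
    Monotone.measurable fun _ _ h => measureReal_mono (Iio_subset_Iio h)
  have hIic : Measurable fun x => ν.real (Iic x) :=
    Monotone.measurable fun _ _ h => measureReal_mono (Iic_subset_Iic.2 h)
  have hatom : Measurable fun x => ν.real {x} := by
    convert hIic.sub hIio using 1
    ext x
    simp [measureReal_Iic_eq_add]
  exact ((hIio.add ((measurable_tieWinProb B v i).mul hatom)).const_mul _).sub measurable_id

lemma bidPayoff_le (hv : 0 ≤ v i) (x : ℝ) : bidPayoff B v i ν x ≤ v i * ν.real (Iic x) - x := by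
  have := mul_le_mul_of_nonneg_left (winProbAgainst_le ν x (B := B) (v := v) (i := i)) hv
  rw [bidPayoff]; linarith

lemma integrable_bidPayoff {μ : Measure ℝ} (hμ : IsStrategy (B i) μ) (ν : Measure ℝ)
    [IsProbabilityMeasure ν] : Integrable (bidPayoff B v i ν) μ := by
  have := hμ.1
  refine Integrable.mono' (integrable_const (|v i| + B i))
    (measurable_bidPayoff ν).aestronglyMeasurable ?_
  filter_upwards [hμ.ae_mem_Icc] with x hx
  have hW0 := winProbAgainst_nonneg (B := B) (v := v) (i := i) ν x
  have hW1 : winProbAgainst B v i ν x ≤ 1 := (winProbAgainst_le ν x).trans measureReal_le_one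
  have : |v i * winProbAgainst B v i ν x| ≤ |v i| := by
    rw [abs_mul, abs_of_nonneg hW0]
    exact mul_le_of_le_one_right (abs_nonneg _) hW1
  rw [Real.norm_eq_abs, bidPayoff]
  exact (abs_sub _ _).trans (add_le_add this ((abs_of_nonneg hx.1).trans_le hx.2))

lemma bidPayoff_of_measure_Iio_eq_one {ν : Measure ℝ} [IsProbabilityMeasure ν] {b : ℝ}
    (hb : ν (Iio b) = 1) : bidPayoff B v i ν b = v i - b := by
  have hatom : ν {b} = 0 :=
    measure_mono_null (by simp) ((prob_compl_eq_zero_iff measurableSet_Iio).2 hb)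
  simp [bidPayoff, winProbAgainst, Measure.real, hb, hatom]

end PurePayoff

namespace IsNash

variable {B v : Fin 2 → ℝ} {F : Fin 2 → Measure ℝ}

/-- Otherwise moving the mass of the worse bids to `b` would be a profitable deviation. -/
lemma ae_bidPayoff_le (hN : IsNash B v F) (i : Fin 2) {b : ℝ} (hb : b ∈ Icc 0 (B i)) :
    ∀ᵐ x ∂F i, bidPayoff B v i (F (1 - i)) b ≤ bidPayoff B v i (F (1 - i)) x := by
  have := (hN.1 i).1
  have := (hN.1 (1 - i)).1
  set g := bidPayoff B v i (F (1 - i))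
  set S := {x | g x < g b}
  have hS : MeasurableSet S := measurableSet_lt (measurable_bidPayoff _) measurable_const
  have hg : Integrable g (F i) := integrable_bidPayoff (hN.1 i) _
  rw [ae_iff]
  simp_rw [not_le]
  by_contra hSpos
  replace hSpos : 0 < F i S := pos_iff_ne_zero.2 hSpos
  set μ := (F i).restrict Sᶜ + F i S • Measure.dirac b
  have hgain : 0 < ∫ x in S, (g b - g x) ∂F i := by
    rw [setIntegral_pos_iff_support_of_nonneg_ae
      (ae_restrict_of_forall_mem hS fun x hx => sub_nonneg.2 (le_of_lt hx))
      ((integrable_const _).sub hg).integrableOn]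
    convert hSpos using 2
    exact inter_eq_right.2 fun x hx => sub_ne_zero.2 (ne_of_gt hx)
  have hdev : expUtil B v i μ (F (1 - i)) - expUtil B v i (F i) (F (1 - i)) =
      ∫ x in S, (g b - g x) ∂F i := by
    rw [expUtil_eq_integral_bidPayoff, expUtil_eq_integral_bidPayoff,
      integral_add_measure hg.restrict ((integrable_dirac (by simp)).smul_measure (by simp)),
      integral_smul_measure, integral_dirac, ← integral_add_compl hS hg,
      integral_sub (integrable_const _).integrableOn hg.integrableOn, setIntegral_const]
    simp only [Measure.real, smul_eq_mul]
    ring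
  linarith [hN.2 i μ ((hN.1 i).restrict_compl_add_dirac hS hb)]

lemma ae_le_sub_bidPayoff (hN : IsNash B v F) (i : Fin 2) (hv : 0 ≤ v i) {b : ℝ}
    (hb : b ∈ Icc 0 (B i)) : ∀ᵐ x ∂F i, x ≤ v i - bidPayoff B v i (F (1 - i)) b := by
  have := (hN.1 (1 - i)).1
  filter_upwards [hN.ae_bidPayoff_le i hb] with x hx
  have := bidPayoff_le (B := B) (i := i) (F (1 - i)) hv x
  nlinarith [measureReal_le_one (μ := F (1 - i)) (s := Iic x)]

lemma bidPayoff_of_sSup_support_lt (hN : IsNash B v F) (i : Fin 2) {b : ℝ}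
    (hb : sSup (F (1 - i)).support < b) : bidPayoff B v i (F (1 - i)) b = v i - b :=
  have := (hN.1 (1 - i)).1
  bidPayoff_of_measure_Iio_eq_one ((hN.1 (1 - i)).measure_Iio_eq_one hb)

lemma sSup_support_le_v (hN : IsNash B v F) (i : Fin 2) (hB : 0 ≤ B i) (hv : 0 ≤ v i) :
    sSup (F i).support ≤ v i := by
  refine (hN.1 i).sSup_support_le_of_ae_le ?_
  filter_upwards [hN.ae_le_sub_bidPayoff i hv ⟨le_rfl, hB⟩] with x hx
  have := mul_nonneg hv (winProbAgainst_nonneg (B := B) (v := v) (i := i) (F (1 - i)) 0)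
  rw [bidPayoff] at hx
  linarith

lemma sSup_support_le_of_lt (hN : IsNash B v F) (i : Fin 2) (hv : 0 ≤ v i) {b : ℝ}
    (hb : b ∈ Icc 0 (B i)) (hlt : sSup (F (1 - i)).support < b) : sSup (F i).support ≤ b := by
  refine (hN.1 i).sSup_support_le_of_ae_le ?_
  simpa [hN.bidPayoff_of_sSup_support_lt i hlt] using hN.ae_le_sub_bidPayoff i hv hb

lemma sSup_support_le_sSup_support (hN : IsNash B v F) (i : Fin 2) (hv : 0 ≤ v i) :
    sSup (F i).support ≤ sSup (F (1 - i)).support := by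
  rcases le_or_gt (B i) (sSup (F (1 - i)).support) with hB | hB
  · exact ((hN.1 i).sSup_support_mem_Icc.2).trans hB
  refine le_of_forall_gt_imp_ge_of_dense fun c hc => ?_
  have hnonneg := (hN.1 (1 - i)).sSup_support_mem_Icc.1
  have hb : min c (B i) ∈ Icc 0 (B i) :=
    ⟨le_min (hnonneg.trans hc.le) (hnonneg.trans hB.le), min_le_right _ _⟩
  exact (hN.sSup_support_le_of_lt i hv hb (lt_min hc hB)).trans (min_le_left _ _)

lemma sSup_support_eq (hN : IsNash B v F) (hv : ∀ i, 0 < v i) (i j : Fin 2) :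
    sSup (F i).support = sSup (F j).support := by
  have h01 := le_antisymm (hN.sSup_support_le_sSup_support 0 (hv 0).le)
    (hN.sSup_support_le_sSup_support 1 (hv 1).le)
  fin_cases i <;> fin_cases j <;> simp [h01]

lemma sSup_support_le_Lval (hN : IsNash B v F) (hB : ∀ i, 0 ≤ B i) (hv : ∀ i, 0 < v i)
    (i : Fin 2) : sSup (F i).support ≤ Lval B v := by
  have hM k := hN.sSup_support_eq hv k i
  have hB' k : sSup (F i).support ≤ B k := hM k ▸ (hN.1 k).sSup_support_mem_Icc.2
  have hv' k : sSup (F i).support ≤ v k := hM k ▸ hN.sSup_support_le_v k (hB k) (hv k).le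
  exact le_min (le_min (hB' 0) (hB' 1)) (le_min (hv' 0) (hv' 1))

/-- A bid `b` between the opponent's top bid and `L` wins surely with margin `v i - b > 0`;
doing as well forces the opponent's mass at or below any equilibrium bid to be at least
`(v i - b) / v i`. -/
lemma measure_Iic_sInf_support_ne_zero (hN : IsNash B v F) (i : Fin 2) (hv : 0 < v i)
    (hM : sSup (F (1 - i)).support < Lval B v) :
    F (1 - i) (Iic (sInf (F i).support)) ≠ 0 := by
  have := (hN.1 (1 - i)).1
  obtain ⟨b, hMb, hbL⟩ := exists_between hM
  have hb : b ∈ Icc 0 (B i) :=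
    ⟨(hN.1 (1 - i)).sSup_support_mem_Icc.1.trans hMb.le, hbL.le.trans (Lval_le_B B v i)⟩
  have hc : 0 < (v i - b) / v i := div_pos (by linarith [Lval_le_v B v i]) hv
  have hle : (v i - b) / v i ≤ (F (1 - i)).real (Iic (sInf (F i).support)) := by
    refine le_measureReal_Iic_of_mem_support ?_ (hN.1 i).sInf_support_mem
    filter_upwards [hN.ae_bidPayoff_le i hb, (hN.1 i).ae_mem_Icc] with x hx hx0
    rw [hN.bidPayoff_of_sSup_support_lt i hMb] at hx
    rw [div_le_iff₀ hv]
    linarith [bidPayoff_le (B := B) (i := i) (F (1 - i)) hv.le x, hx0.1]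
  intro h0
  rw [measureReal_def, h0, ENNReal.toReal_zero] at hle
  linarith

lemma measure_singleton_eq_zero_of_lt_Lval (hN : IsNash B v F) (i : Fin 2) (hv : 0 < v i)
    {s : ℝ} (hs : s ∈ Ico 0 (Lval B v)) (hatom : F (1 - i) {s} ≠ 0) : F i {s} = 0 := by
  have := (hN.1 (1 - i)).1
  set ν := F (1 - i)
  set g := bidPayoff B v i ν
  set a := ν.real {s}
  have ha : 0 < a := ENNReal.toReal_pos hatom (measure_ne_top _ _)
  obtain ⟨ε, hε, hεa, hεL⟩ : ∃ ε : ℝ, 0 < ε ∧ ε ≤ v i * a / 4 ∧ ε ≤ Lval B v - s :=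
    ⟨_, lt_min (by positivity) (by linarith [hs.2]), min_le_left _ _, min_le_right _ _⟩
  have hb : s + ε ∈ Icc 0 (B i) := by
    constructor <;> linarith [hs.1, Lval_le_B B v i]
  have hgs : g s = v i * (ν.real (Iio s) + 1 / 2 * a) - s := by
    simp only [g, a, bidPayoff, winProbAgainst, tieWinProb_of_ne B v i hs.2.ne]
  have hgb : v i * (ν.real (Iio s) + a) - (s + ε) ≤ g (s + ε) := by
    have hIic : ν.real (Iic s) ≤ ν.real (Iio (s + ε)) :=
      measureReal_mono (Iic_subset_Iio.2 (by linarith))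
    have htie : 0 ≤ tieWinProb B v i (s + ε) * ν.real {s + ε} :=
      mul_nonneg (tieWinProb_mem_Icc B v i (s + ε)).1 measureReal_nonneg
    rw [measureReal_Iic_eq_add] at hIic
    simp only [g, bidPayoff, winProbAgainst]
    nlinarith
  have hlt : g s < g (s + ε) := by nlinarith
  have hnull := hN.ae_bidPayoff_le i hb
  rw [ae_iff] at hnull
  exact measure_mono_null (by simpa using hlt) hnull

lemma exists_Lval_le_sSup_support (hN : IsNash B v F) (hv : ∀ i, 0 < v i) :
    ∃ i, Lval B v ≤ sSup (F i).support := by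
  by_contra! hlt
  have hpos i := hN.measure_Iic_sInf_support_ne_zero i (hv i) (hlt _)
  have hle i : sInf (F (1 - i)).support ≤ sInf (F i).support :=
    sInf_support_le_of_measure_Iic_ne_zero (hN.1 (1 - i)).bddBelow_support (hpos i)
  have hs i : sInf (F (1 - i)).support = sInf (F i).support := by
    refine le_antisymm (hle i) ?_
    simpa only [sub_sub_cancel] using hle (1 - i)
  have hatom i : F i {sInf (F i).support} ≠ 0 := by
    simpa only [sub_sub_cancel, hs, measure_Iic_sInf_support (hN.1 i).bddBelow_support]
      using hpos (1 - i)
  have hs0 : sInf (F 0).support ∈ Ico 0 (Lval B v) :=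
    ⟨((hN.1 0).support_subset_Icc (hN.1 0).sInf_support_mem).1,
      (csInf_le_csSup (hN.1 0).support_nonempty (hN.1 0).bddBelow_support
        (hN.1 0).bddAbove_support).trans_lt (hlt 0)⟩
  refine hatom 0 (hN.measure_singleton_eq_zero_of_lt_Lval 0 (hv 0) hs0 ?_)
  simpa [← hs 0] using hatom 1

end IsNash

theorem support_sup_eq_L (B v : Fin 2 → ℝ) (hB : ∀ i, 0 ≤ B i) (hv : ∀ i, 0 < v i)
    (F : Fin 2 → Measure ℝ) (hN : IsNash B v F) :
    ∀ i, sSup (supp (F i)) = Lval B v := by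
  intro i
  rw [supp_eq_support]
  obtain ⟨k, hk⟩ := hN.exists_Lval_le_sSup_support hv
  exact le_antisymm (hN.sSup_support_le_Lval hB hv i) (hk.trans (hN.sSup_support_eq hv k i).le)
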